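/- Let C ⊆ L⁰ be nonempty and satisfy the countable concatenation property, and for x ∉ C let H_{C,x} be the largest set H ∈ 𝒢 such that for every A ⊆ H with P(A) > 0 no ξ ∈ C satisfies x = ξ a.e. on A. Then: (1) if x ∉ C, then H_{C,x} ⊆ D_C up to null sets, and hence P(D_C) ≥ P(H_{C,x}) > 0; (2) if x ∉ C and x is outside C, then H_{C,x} = D_C up to null sets; (3) if there exists x ∈ L⁰ with x ∉ C, then the set χ := {y ∈ L⁰ : y is outside C} is nonempty. -/

import Mathlib

/-!
Everything rests on exhaustion: in a finite measure space, a class of sets that contains `∅` and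
is closed under countable unions has an a.e.-largest member. By countable concatenation, the sets
on which a fixed `x` agrees with some element of `C` form such a class, and `x` is locally
separated from `C` on the complement of its largest member, which is non-null when `x ∉ C`.
Pasting witnesses along a partition, the sets on which some `y` is locally separated from `C`
form such a class too; the complement `F` of its largest member lies a.e. inside the largest
agreement set of every `x`, so `F` is full, hence `F ⊆ A_C` a.e. and `D_C` lies a.e. inside
that largest member.
-/

open MeasureTheory

variable {Ω : Type*} [MeasurableSpace Ω]

/-- The countable concatenation property (CSet): for every countable measurable partition
`{A n}` of `Ω` and every sequence `{x n} ⊆ C`, the concatenation `∑ n, 1_{A n} • x n`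
(i.e. the element `z ∈ L⁰` agreeing a.e. with `x n` on each `A n`) belongs to `C`. -/
def CSet (μ : Measure Ω) (C : Set (Ω →ₘ[μ] ℝ)) : Prop :=
  ∀ A : ℕ → Set Ω, (∀ n, MeasurableSet (A n)) → Pairwise (Function.onFun Disjoint A) →
    (⋃ n, A n) = Set.univ →
    ∀ x : ℕ → Ω →ₘ[μ] ℝ, (∀ n, x n ∈ C) →
      ∀ z : Ω →ₘ[μ] ℝ, (∀ n, ∀ᵐ ω ∂μ, ω ∈ A n → z ω = x n ω) → z ∈ C

/-- The countable concatenation hull `C^cc` of `C`. -/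
def ccHull (μ : Measure Ω) (C : Set (Ω →ₘ[μ] ℝ)) : Set (Ω →ₘ[μ] ℝ) :=
  {z | ∃ (A : ℕ → Set Ω) (x : ℕ → Ω →ₘ[μ] ℝ),
    (∀ n, MeasurableSet (A n)) ∧ Pairwise (Function.onFun Disjoint A) ∧
    (⋃ n, A n) = Set.univ ∧ (∀ n, x n ∈ C) ∧
    ∀ n, ∀ᵐ ω ∂μ, ω ∈ A n → z ω = x n ω}

/-- `C 1_A = L⁰ 1_A`: every `x ∈ L⁰` agrees a.e. on `A` with some element of `C`. -/
def FullOn (μ : Measure Ω) (C : Set (Ω →ₘ[μ] ℝ)) (A : Set Ω) : Prop :=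
  ∀ x : Ω →ₘ[μ] ℝ, ∃ ξ ∈ C, ∀ᵐ ω ∂μ, ω ∈ A → x ω = ξ ω

/-- `A` is (a version of) the maximal set `A_C` of the class
`{A ∈ 𝒢 ∣ C 1_A = L⁰ 1_A}`; its complement `Aᶜ` is then `D_C`. -/
def IsMaxFull (μ : Measure Ω) (C : Set (Ω →ₘ[μ] ℝ)) (A : Set Ω) : Prop :=
  MeasurableSet A ∧ FullOn μ C A ∧
    ∀ B : Set Ω, MeasurableSet B → FullOn μ C B → μ (B \ A) = 0

/-- `x` is locally separated from `C` on `H`: for every `B ⊆ H` with `μ B > 0`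
there is no `ξ ∈ C` with `x = ξ` a.e. on `B`.  With `H = D_C` this is the paper's
notion of `x` being outside `C`. -/
def LocOutside (μ : Measure Ω) (C : Set (Ω →ₘ[μ] ℝ)) (x : Ω →ₘ[μ] ℝ) (H : Set Ω) : Prop :=
  ∀ B : Set Ω, MeasurableSet B → B ⊆ H → 0 < μ B →
    ¬ ∃ ξ ∈ C, ∀ᵐ ω ∂μ, ω ∈ B → x ω = ξ ω

/-- `H` is (a version of) the largest measurable set `H_{C,x}` on which `x` is locally
separated from `C`. -/
def IsMaxLocOutside (μ : Measure Ω) (C : Set (Ω →ₘ[μ] ℝ)) (x : Ω →ₘ[μ] ℝ) (H : Set Ω) : Prop :=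
  MeasurableSet H ∧ LocOutside μ C x H ∧
    ∀ B : Set Ω, MeasurableSet B → LocOutside μ C x B → μ (B \ H) = 0

/-- `C ⊆ L⁰` is conditionally evenly convex: there are a family `L ⊆ L⁰` and
`Y_{x'} ∈ L⁰` for each `x' ∈ L` with
`C = ⋂_{x' ∈ L} {x ∣ x·x' < Y_{x'} a.e. on D_C}` (where `D_C = Aᶜ` for the maximal
full set `A = A_C`; the case `L = ∅` gives `C = L⁰`). -/
def CondEvenlyConvex (μ : Measure Ω) (C : Set (Ω →ₘ[μ] ℝ)) : Prop :=
  ∃ A : Set Ω, IsMaxFull μ C A ∧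
    ∃ (L : Set (Ω →ₘ[μ] ℝ)) (Y : (Ω →ₘ[μ] ℝ) → Ω →ₘ[μ] ℝ),
      C = ⋂ x' ∈ L, {x : Ω →ₘ[μ] ℝ | ∀ᵐ ω ∂μ, ω ∈ Aᶜ → x ω * x' ω < Y x' ω}

/-- The polar `C°` of `C` (relative to `D = D_C`). -/
def polarSet (μ : Measure Ω) (C : Set (Ω →ₘ[μ] ℝ)) (D : Set Ω) : Set (Ω →ₘ[μ] ℝ) :=
  {x' | ∀ x ∈ C, ∀ᵐ ω ∂μ, ω ∈ D → x ω * x' ω < 1}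

/-- The bipolar `C°°` of `C` (relative to `D = D_C`). -/
def bipolarSet (μ : Measure Ω) (C : Set (Ω →ₘ[μ] ℝ)) (D : Set Ω) : Set (Ω →ₘ[μ] ℝ) :=
  {x | ∀ x' ∈ polarSet μ C D, ∀ᵐ ω ∂μ, ω ∈ D → x ω * x' ω < 1}

open Set Function

lemma Set.compl_sdiff_comm {α : Type*} (s t : Set α) : sᶜ \ t = tᶜ \ s := by
  rw [Set.sdiff_eq, Set.sdiff_eq, inter_comm]

lemma exists_partition_inter_iUnion_subset (B : ℕ → Set Ω) (hB : ∀ n, MeasurableSet (B n)) :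
    ∃ D : ℕ → Set Ω, (∀ n, MeasurableSet (D n)) ∧ Pairwise (Disjoint on D) ∧
      ⋃ n, D n = univ ∧ ∀ n, D n ∩ ⋃ k, B k ⊆ B n := by
  refine ⟨disjointed fun n => B n ∪ (⋃ k, B k)ᶜ,
    MeasurableSet.disjointed fun n => (hB n).union (MeasurableSet.iUnion hB).compl,
    disjoint_disjointed _, ?_, fun n ω ⟨hωD, hωB⟩ => ?_⟩
  · rw [iUnion_disjointed, ← iUnion_union, union_compl_self]
  · exact (disjointed_subset _ n hωD).resolve_right (not_not_intro hωB)

lemma MeasureTheory.AEEqFun.exists_ae_eq_on_partition (μ : Measure Ω) {D : ℕ → Set Ω}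
    (hD : ∀ n, MeasurableSet (D n)) (hdisj : Pairwise (Disjoint on D)) (hcov : ⋃ n, D n = univ)
    (x : ℕ → Ω →ₘ[μ] ℝ) : ∃ z : Ω →ₘ[μ] ℝ, ∀ n, ∀ᵐ ω ∂μ, ω ∈ D n → z ω = x n ω := by
  classical
  have hmem : ∀ ω, ∃ n, ω ∈ D n := fun ω => mem_iUnion.1 (hcov ▸ mem_univ ω)
  have hz : Measurable fun ω => (x (Nat.find (hmem ω))).aestronglyMeasurable.mk _ ω :=
    Measurable.find (p := fun n ω => ω ∈ D n)
      (fun n => (x n).aestronglyMeasurable.stronglyMeasurable_mk.measurable) hD hmem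
  refine ⟨AEEqFun.mk _ hz.aestronglyMeasurable, fun n => ?_⟩
  filter_upwards [AEEqFun.coeFn_mk _ hz.aestronglyMeasurable,
    (x n).aestronglyMeasurable.ae_eq_mk] with ω hzω hxω hω
  have hfind : Nat.find (hmem ω) = n := by
    by_contra hne
    exact disjoint_left.1 (hdisj hne) (Nat.find_spec (hmem ω)) hω
  rw [hzω, hfind, hxω]

lemma exists_measurableSet_ae_maximal (μ : Measure Ω) [IsFiniteMeasure μ] {P : Set Ω → Prop}
    (hP₀ : P ∅)
    (hP : ∀ B : ℕ → Set Ω, (∀ n, MeasurableSet (B n)) → (∀ n, P (B n)) → P (⋃ n, B n)) :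
    ∃ M, MeasurableSet M ∧ P M ∧ ∀ B, MeasurableSet B → P B → μ (B \ M) = 0 := by
  set S := μ '' {B | MeasurableSet B ∧ P B}
  obtain ⟨u, -, hu, huS⟩ :=
    exists_seq_tendsto_sSup (⟨μ ∅, ∅, ⟨.empty, hP₀⟩, rfl⟩ : S.Nonempty) (OrderTop.bddAbove S)
  choose B hB hBu using huS
  set M := ⋃ n, B n
  have hM : MeasurableSet M := .iUnion fun n => (hB n).1
  have hle : ∀ B', MeasurableSet B' → P B' → μ B' ≤ μ M := fun B' hB' hPB' =>
    calc μ B' ≤ sSup S := le_sSup ⟨B', ⟨hB', hPB'⟩, rfl⟩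
      _ ≤ μ M := le_of_tendsto' hu fun n => hBu n ▸ measure_mono (subset_iUnion B n)
  refine ⟨M, hM, hP B (fun n => (hB n).1) fun n => (hB n).2, fun B' hB' hPB' => ?_⟩
  have hunion : P (B' ∪ M) := by
    have := hP (fun n => Nat.casesOn n B' B) (fun n => n.casesOn hB' fun n => (hB n).1)
      fun n => n.casesOn hPB' fun n => (hB n).2
    rwa [← union_iUnion_nat_succ] at this
  rw [← union_sdiff_right,
    measure_sdiff subset_union_right hM.nullMeasurableSet (measure_ne_top μ M)]
  exact tsub_eq_zero_of_le (hle _ (hB'.union hM) hunion)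

def AgreesOn (μ : Measure Ω) (C : Set (Ω →ₘ[μ] ℝ)) (x : Ω →ₘ[μ] ℝ) (B : Set Ω) : Prop :=
  ∃ ξ ∈ C, ∀ᵐ ω ∂μ, ω ∈ B → x ω = ξ ω

section

variable {μ : Measure Ω} {C : Set (Ω →ₘ[μ] ℝ)} {x : Ω →ₘ[μ] ℝ}

lemma AgreesOn.mono_ae {B B' : Set Ω} (h : AgreesOn μ C x B) (hB' : B' ≤ᵐ[μ] B) :
    AgreesOn μ C x B' := by
  obtain ⟨ξ, hξC, hξ⟩ := h
  exact ⟨ξ, hξC, by filter_upwards [hξ, hB'] with ω hω hB'ω hω' using hω (hB'ω hω')⟩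

lemma mem_of_agreesOn_univ (h : AgreesOn μ C x univ) : x ∈ C := by
  obtain ⟨ξ, hξC, hξ⟩ := h
  rwa [AEEqFun.ext (hξ.mono fun ω h => h (mem_univ ω))]

lemma agreesOn_iUnion (hcc : CSet μ C) {B : ℕ → Set Ω} (hB : ∀ n, MeasurableSet (B n))
    (h : ∀ n, AgreesOn μ C x (B n)) : AgreesOn μ C x (⋃ n, B n) := by
  choose ξ hξC hξ using h
  obtain ⟨D, hD, hdisj, hcov, hDB⟩ := exists_partition_inter_iUnion_subset B hB
  obtain ⟨z, hz⟩ := AEEqFun.exists_ae_eq_on_partition μ hD hdisj hcov ξ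
  refine ⟨z, hcc D hD hdisj hcov ξ hξC z hz, ?_⟩
  filter_upwards [ae_all_iff.2 hz, ae_all_iff.2 hξ] with ω hzω hξω hω
  obtain ⟨k, hk⟩ := mem_iUnion.1 (hcov ▸ mem_univ ω)
  rw [hξω k (hDB k ⟨hk, hω⟩), hzω k hk]

lemma exists_ae_maximal_agreesOn [IsFiniteMeasure μ] (hne : C.Nonempty) (hcc : CSet μ C)
    (x : Ω →ₘ[μ] ℝ) :
    ∃ M, MeasurableSet M ∧ AgreesOn μ C x M ∧
      ∀ B, MeasurableSet B → AgreesOn μ C x B → μ (B \ M) = 0 :=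
  exists_measurableSet_ae_maximal μ (P := AgreesOn μ C x)
    (by obtain ⟨ξ, hξ⟩ := hne; exact ⟨ξ, hξ, .of_forall fun ω h => absurd h (notMem_empty ω)⟩)
    fun _ hB => agreesOn_iUnion hcc hB

lemma locOutside_compl_of_ae_maximal {M : Set Ω}
    (hM : ∀ B, MeasurableSet B → AgreesOn μ C x B → μ (B \ M) = 0) : LocOutside μ C x Mᶜ :=
  fun B hB hBM hpos hx => hpos.ne' (measure_mono_null
    (show B ⊆ B \ M from fun _ h => ⟨h, hBM h⟩) (hM B hB hx))

lemma LocOutside.measure_inter_eq_zero {H B : Set Ω} (h : LocOutside μ C x H)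
    (hH : MeasurableSet H) (hB : MeasurableSet B) (hx : AgreesOn μ C x B) : μ (H ∩ B) = 0 := by
  by_contra hpos
  exact h (H ∩ B) (hH.inter hB) inter_subset_left (pos_iff_ne_zero.2 hpos)
    (hx.mono_ae inter_subset_right.eventuallyLE)

lemma LocOutside.mono_ae {H H' : Set Ω} (h : LocOutside μ C x H) (hH : MeasurableSet H)
    (hH' : H' ≤ᵐ[μ] H) : LocOutside μ C x H' := by
  intro B hB hBH' hpos (hx : AgreesOn μ C x B)
  have hBH : B ≤ᵐ[μ] (B ∩ H : Set Ω) := by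
    filter_upwards [hH'] with ω hω hωB using ⟨hωB, hω (hBH' hωB)⟩
  exact h (B ∩ H) (hB.inter hH) inter_subset_right (hpos.trans_le (measure_mono_ae hBH))
    (hx.mono_ae inter_subset_left.eventuallyLE)

lemma exists_locOutside_iUnion {B : ℕ → Set Ω} (hB : ∀ n, MeasurableSet (B n))
    (h : ∀ n, ∃ y, LocOutside μ C y (B n)) : ∃ y, LocOutside μ C y (⋃ n, B n) := by
  choose y hy using h
  obtain ⟨D, hD, hdisj, hcov, hDB⟩ := exists_partition_inter_iUnion_subset B hB
  obtain ⟨z, hz⟩ := AEEqFun.exists_ae_eq_on_partition μ hD hdisj hcov y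
  refine ⟨z, fun B' hB' hB'B hpos ⟨ξ, hξC, hξ⟩ => ?_⟩
  obtain ⟨k, hk⟩ : ∃ k, 0 < μ (B' ∩ D k) := exists_measure_pos_of_not_measure_iUnion_null
    (by rw [← inter_iUnion, hcov, inter_univ]; exact hpos.ne')
  refine hy k (B' ∩ D k) (hB'.inter (hD k))
    (fun ω hω => hDB k ⟨hω.2, hB'B hω.1⟩) hk ⟨ξ, hξC, ?_⟩
  filter_upwards [hξ, hz k] with ω hξω hzω hω
  rw [← hzω hω.2, hξω hω.1]

lemma IsMaxLocOutside.measure_pos [IsFiniteMeasure μ] (hne : C.Nonempty) (hcc : CSet μ C)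
    (hx : x ∉ C) {H : Set Ω} (hH : IsMaxLocOutside μ C x H) : 0 < μ H := by
  obtain ⟨M, hM, hxM, hMmax⟩ := exists_ae_maximal_agreesOn hne hcc x
  have hMc : μ Mᶜ ≠ 0 := fun h =>
    hx (mem_of_agreesOn_univ (hxM.mono_ae (ae_le_set.2 (by rwa [← compl_eq_univ_sdiff]))))
  calc 0 < μ Mᶜ := pos_iff_ne_zero.2 hMc
    _ ≤ μ H := measure_mono_ae <| ae_le_set.2 <|
      hH.2.2 _ hM.compl (locOutside_compl_of_ae_maximal hMmax)

lemma exists_locOutside_compl [IsFiniteMeasure μ] (hne : C.Nonempty) (hcc : CSet μ C)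
    {A : Set Ω} (hA : IsMaxFull μ C A) : ∃ y, LocOutside μ C y Aᶜ := by
  obtain ⟨M, hM, ⟨y, hy⟩, hMmax⟩ :=
    exists_measurableSet_ae_maximal μ (P := fun B => ∃ y, LocOutside μ C y B)
      ⟨0, fun _ _ hB hpos => absurd (measure_mono_null hB measure_empty) hpos.ne'⟩
      fun _ hB => exists_locOutside_iUnion hB
  have hfull : FullOn μ C Mᶜ := fun w => by
    obtain ⟨Mw, hMw, hwMw, hMwmax⟩ := exists_ae_maximal_agreesOn hne hcc w
    have := hMmax _ hMw.compl ⟨w, locOutside_compl_of_ae_maximal hMwmax⟩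
    exact hwMw.mono_ae (ae_le_set.2 (by rwa [compl_sdiff_comm] at this))
  have hAM : (Aᶜ : Set Ω) ≤ᵐ[μ] M := ae_le_set.2 <| by
    rw [compl_sdiff_comm A M]; exact hA.2.2 _ hM.compl hfull
  exact ⟨y, hy.mono_ae hM hAM⟩

end

/-- **Relations between `H_{C,x}` and `D_C`.**  Let `C ⊆ L⁰` be nonempty with the
countable concatenation property, and let `A` be the maximal set `A_C`
(so `Aᶜ = D_C`).  Then: (1) if `x ∉ C` and `H` is the largest set on which `x` is
locally separated from `C`, then `H ⊆ D_C` up to null sets and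
`0 < μ H ≤ μ D_C`; (2) if moreover `x` is outside `C` then `H = D_C` up to
null sets; (3) if some `x ∉ C` exists, then some `y ∈ L⁰` is outside `C`. -/
theorem stmt15 (μ : Measure Ω) [IsProbabilityMeasure μ]
    (C : Set (Ω →ₘ[μ] ℝ)) (hne : C.Nonempty) (hcc : CSet μ C)
    (A : Set Ω) (hA : IsMaxFull μ C A) :
    (∀ x : Ω →ₘ[μ] ℝ, x ∉ C → ∀ H : Set Ω, IsMaxLocOutside μ C x H →
        μ (H \ Aᶜ) = 0 ∧ 0 < μ H ∧ μ H ≤ μ Aᶜ) ∧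
      (∀ x : Ω →ₘ[μ] ℝ, x ∉ C → LocOutside μ C x Aᶜ →
        ∀ H : Set Ω, IsMaxLocOutside μ C x H →
          μ (H \ Aᶜ) = 0 ∧ μ (Aᶜ \ H) = 0) ∧
      ((∃ x : Ω →ₘ[μ] ℝ, x ∉ C) → ∃ y : Ω →ₘ[μ] ℝ, LocOutside μ C y Aᶜ) := by
  have hHA : ∀ x H, IsMaxLocOutside μ C x H → μ (H \ Aᶜ) = 0 := fun x H hH => by
    rw [sdiff_compl]
    exact hH.2.1.measure_inter_eq_zero hH.1 hA.1 (hA.2.1 x)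
  refine ⟨fun x hx H hH => ⟨hHA x H hH, hH.measure_pos hne hcc hx, ?_⟩,
    fun x _ hloc H hH => ⟨hHA x H hH, hH.2.2 _ hA.1.compl hloc⟩,
    fun _ => exists_locOutside_compl hne hcc hA⟩
  exact measure_mono_ae (ae_le_set.2 (hHA x H hH))
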